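/- For the Doi–Onsager interaction W_DO(θ) = −|sin(2πθ)| on 𝕋 and every K > 3π/4, there exists a continuous probability density q on 𝕋 such that ∫_𝕋 q log q dθ + K ∫_𝕋 ∫_𝕋 |sin(2π(θ−θ'))| q(θ) q(θ') dθ dθ' < 2K/π; that is, in the supercritical regime K > 3π/4 the uniform density is not a global minimizer of the Doi–Onsager free energy. -/

import Mathlib

open MeasureTheory Real Complex
open scoped Real

noncomputable section

/-- The normalized Haar (Lebesgue) probability measure on the circle `𝕋 = ℝ/ℤ`. -/
def circleMeasure : Measure UnitAddCircle := AddCircle.haarAddCircle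

/-- `|sin(2πθ)|` realized on the circle as `|Im e^{2πiθ}|`. -/
def absSin (θ : UnitAddCircle) : ℝ := |(fourier 1 θ).im|

/-!
Perturb the uniform density in its second Fourier mode, `q = 1 + ε cos 4πθ`. The interaction
energy is a convolution with the even kernel `|sin 2πθ|`, whose second cosine coefficient
`∫ |sin 2πθ| cos 4πθ = -2/(3π)` lowers it by `ε²/(3π)`, while the entropy `∫ q log q` grows only
by `ε²/4 + O(ε³)`. For `K > 3π/4` the gain `Kε²/(3π)` beats `ε²/4` once `ε` is small.
-/

lemma Function.Periodic.intervalIntegral_comp_two_pi_mul {g : ℝ → ℝ} (hg : Periodic g π)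
    (hc : Continuous g) : ∫ x in (0 : ℝ)..1, g (2 * π * x) = π⁻¹ * ∫ u in (0 : ℝ)..π, g u := by
  have hsplit := hg.intervalIntegral_add_eq_add 0 π fun _ _ => hc.intervalIntegrable _ _
  rw [zero_add] at hsplit
  rw [intervalIntegral.integral_comp_mul_left _ (by positivity), mul_zero, mul_one, two_mul,
    hsplit, smul_eq_mul]
  field_simp

lemma integral_abs_sin_mul_eq_sin_mul (f : ℝ → ℝ) :
    ∫ u in (0 : ℝ)..π, |Real.sin u| * f u = ∫ u in (0 : ℝ)..π, Real.sin u * f u := by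
  refine intervalIntegral.integral_congr fun u hu => ?_
  rw [Set.uIcc_of_le pi_pos.le] at hu
  rw [abs_of_nonneg (sin_nonneg_of_nonneg_of_le_pi hu.1 hu.2)]

lemma one_add_mul_log_one_add_le {t : ℝ} (ht : |t| ≤ 1 / 2) :
    (1 + t) * Real.log (1 + t) ≤ t + t ^ 2 / 2 + 4 * |t| ^ 3 := by
  have hlog := abs_log_sub_add_sum_range_le (x := -t) (by rw [abs_neg]; linarith) 2
  norm_num [Finset.sum_range_succ] at hlog
  have hcube : |t| ^ 3 / (1 - |t|) ≤ 2 * |t| ^ 3 := by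
    rw [div_le_iff₀ (by linarith)]; nlinarith [pow_nonneg (abs_nonneg t) 3]
  have hle : Real.log (1 + t) ≤ t - t ^ 2 / 2 + 2 * |t| ^ 3 := by
    linarith [(abs_le.mp hlog).2]
  have ht3 : -(t ^ 3) ≤ |t| ^ 3 := by
    rw [← abs_pow]; exact neg_le_abs _
  calc (1 + t) * Real.log (1 + t) ≤ (1 + t) * (t - t ^ 2 / 2 + 2 * |t| ^ 3) :=
        mul_le_mul_of_nonneg_left hle (by linarith [neg_abs_le t])
    _ ≤ t + t ^ 2 / 2 + 4 * |t| ^ 3 := by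
        nlinarith [le_abs_self t, pow_nonneg (abs_nonneg t) 3]

instance : IsProbabilityMeasure circleMeasure :=
  inferInstanceAs (IsProbabilityMeasure AddCircle.haarAddCircle)

instance : circleMeasure.IsAddHaarMeasure :=
  inferInstanceAs (AddCircle.haarAddCircle : Measure UnitAddCircle).IsAddHaarMeasure

instance : circleMeasure.IsNegInvariant :=
  inferInstanceAs (AddCircle.haarAddCircle : Measure UnitAddCircle).IsNegInvariant

lemma integral_circleMeasure_eq (f : UnitAddCircle → ℝ) :
    ∫ θ, f θ ∂circleMeasure = ∫ x in (0 : ℝ)..1, f x := by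
  have h : circleMeasure = volume := by
    rw [AddCircle.volume_eq_smul_haarAddCircle]
    simp [circleMeasure]
  rw [h, ← UnitAddCircle.intervalIntegral_preimage 0 f, zero_add]

lemma Continuous.integrable_circleMeasure {f : UnitAddCircle → ℝ} (hf : Continuous f) :
    Integrable f circleMeasure :=
  hf.integrable_of_hasCompactSupport (HasCompactSupport.of_compactSpace f)

lemma re_fourier_coe (n : ℤ) (x : ℝ) :
    (fourier n (x : UnitAddCircle)).re = Real.cos (2 * π * n * x) := by
  rw [fourier_coe_apply, ← exp_ofReal_mul_I_re]
  push_cast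
  ring_nf

lemma im_fourier_coe (n : ℤ) (x : ℝ) :
    (fourier n (x : UnitAddCircle)).im = Real.sin (2 * π * n * x) := by
  rw [fourier_coe_apply, ← exp_ofReal_mul_I_im]
  push_cast
  ring_nf

lemma abs_re_fourier_le_one (n : ℤ) (θ : UnitAddCircle) : |(fourier n θ).re| ≤ 1 := by
  simpa [fourier_apply, Circle.norm_coe] using abs_re_le_norm (fourier n θ)

lemma abs_im_fourier_le_one (n : ℤ) (θ : UnitAddCircle) : |(fourier n θ).im| ≤ 1 := by
  simpa [fourier_apply, Circle.norm_coe] using abs_im_le_norm (fourier n θ)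

lemma absSin_coe (x : ℝ) : absSin x = |Real.sin (2 * π * x)| := by
  rw [absSin, im_fourier_coe]
  simp

lemma absSin_neg (θ : UnitAddCircle) : absSin (-θ) = absSin θ := by
  obtain ⟨x, rfl⟩ := QuotientAddGroup.mk_surjective θ
  rw [← AddCircle.coe_neg, absSin_coe, absSin_coe, mul_neg, Real.sin_neg, abs_neg]

@[fun_prop]
lemma continuous_absSin : Continuous absSin := by
  unfold absSin; fun_prop

lemma integral_re_fourier {n : ℤ} (hn : n ≠ 0) : ∫ θ, (fourier n θ).re ∂circleMeasure = 0 := by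
  have h := integral_add_right_eq_self (μ := circleMeasure) (fun θ => (fourier n θ).re)
    ((1 / 2 / n : ℝ) : UnitAddCircle)
  simp only [fourier_add_half_inv_index hn one_pos, neg_re, MeasureTheory.integral_neg] at h
  linarith

lemma re_fourier_sq (n : ℤ) (θ : UnitAddCircle) :
    (fourier n θ).re ^ 2 = 1 / 2 + (fourier (2 * n) θ).re / 2 := by
  obtain ⟨x, rfl⟩ := QuotientAddGroup.mk_surjective θ
  rw [re_fourier_coe, re_fourier_coe, Real.cos_sq]
  push_cast
  ring_nf

lemma integral_re_fourier_sq {n : ℤ} (hn : n ≠ 0) :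
    ∫ θ, (fourier n θ).re ^ 2 ∂circleMeasure = 1 / 2 := by
  simp_rw [re_fourier_sq]
  rw [integral_add (integrable_const _)
    (by fun_prop : Continuous fun θ => (fourier (2 * n) θ).re / 2).integrable_circleMeasure,
    MeasureTheory.integral_div 2 fun θ => (fourier (2 * n) θ).re,
    integral_re_fourier (by simpa using hn)]
  simp

lemma integral_mul_im_fourier_of_even {W : UnitAddCircle → ℝ} (hW : ∀ θ, W (-θ) = W θ) (n : ℤ) :
    ∫ θ, W θ * (fourier n θ).im ∂circleMeasure = 0 := by
  have hodd : ∀ θ : UnitAddCircle, (fourier n (-θ)).im = -(fourier n θ).im := fun θ => by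
    obtain ⟨x, rfl⟩ := QuotientAddGroup.mk_surjective θ
    rw [← AddCircle.coe_neg, im_fourier_coe, im_fourier_coe, mul_neg, Real.sin_neg]
  have h := MeasureTheory.integral_neg_eq_self (fun θ => W θ * (fourier n θ).im) circleMeasure
  simp only [hW, hodd, mul_neg, MeasureTheory.integral_neg] at h
  linarith

lemma re_fourier_sub (n : ℤ) (θ φ : UnitAddCircle) :
    (fourier n (θ - φ)).re
      = (fourier n θ).re * (fourier n φ).re + (fourier n θ).im * (fourier n φ).im := by
  obtain ⟨x, rfl⟩ := QuotientAddGroup.mk_surjective θ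
  obtain ⟨y, rfl⟩ := QuotientAddGroup.mk_surjective φ
  rw [← AddCircle.coe_sub]
  simp only [re_fourier_coe, im_fourier_coe, mul_sub, Real.cos_sub]

lemma integral_sub_mul_re_fourier {W : UnitAddCircle → ℝ} (hW : Integrable W circleMeasure)
    (n : ℤ) (θ : UnitAddCircle) :
    ∫ φ, W (θ - φ) * (fourier n φ).re ∂circleMeasure
      = (fourier n θ).re * ∫ φ, W φ * (fourier n φ).re ∂circleMeasure
        + (fourier n θ).im * ∫ φ, W φ * (fourier n φ).im ∂circleMeasure := by
  have hmul : ∀ g : UnitAddCircle → ℝ, Continuous g → (∀ φ, |g φ| ≤ 1) →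
      Integrable (fun φ => W φ * g φ) circleMeasure := fun g hg hg1 =>
    hW.mul_bdd hg.aestronglyMeasurable (Filter.Eventually.of_forall hg1)
  rw [← integral_sub_left_eq_self _ circleMeasure θ]
  simp only [sub_sub_cancel, re_fourier_sub, mul_add, mul_left_comm (W _)]
  rw [integral_add, MeasureTheory.integral_const_mul, MeasureTheory.integral_const_mul]
  · exact (hmul _ (by fun_prop) (abs_re_fourier_le_one n)).const_mul _
  · exact (hmul _ (by fun_prop) (abs_im_fourier_le_one n)).const_mul _

lemma integral_absSin : ∫ θ, absSin θ ∂circleMeasure = 2 / π := by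
  have hper : Function.Periodic (fun u => |Real.sin u|) π := fun u => by simp [Real.sin_add_pi]
  calc ∫ θ, absSin θ ∂circleMeasure = ∫ x in (0 : ℝ)..1, |Real.sin (2 * π * x)| := by
        simp [integral_circleMeasure_eq, absSin_coe]
    _ = π⁻¹ * ∫ u in (0 : ℝ)..π, |Real.sin u| := hper.intervalIntegral_comp_two_pi_mul (by fun_prop)
    _ = 2 / π := by
        have h := integral_abs_sin_mul_eq_sin_mul fun _ => 1
        norm_num [integral_sin] at h
        rw [h, div_eq_inv_mul, mul_comm]

lemma integral_absSin_mul_re_fourier_two :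
    ∫ θ, absSin θ * (fourier 2 θ).re ∂circleMeasure = -(2 / (3 * π)) := by
  have hper : Function.Periodic (fun u => |Real.sin u| * Real.cos (2 * u)) π := fun u => by
    simp [Real.sin_add_pi, mul_add, Real.cos_add_two_pi]
  calc ∫ θ, absSin θ * (fourier 2 θ).re ∂circleMeasure
        = ∫ x in (0 : ℝ)..1, |Real.sin (2 * π * x)| * Real.cos (2 * (2 * π * x)) := by
        rw [integral_circleMeasure_eq]
        congr 1 with x
        rw [absSin_coe, re_fourier_coe]
        ring_nf
    _ = π⁻¹ * ∫ u in (0 : ℝ)..π, |Real.sin u| * Real.cos (2 * u) :=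
        hper.intervalIntegral_comp_two_pi_mul (by fun_prop)
    _ = π⁻¹ * ∫ u in (0 : ℝ)..π, (Real.sin u - 2 * Real.sin u ^ 3) := by
        rw [integral_abs_sin_mul_eq_sin_mul]
        congr 1
        refine intervalIntegral.integral_congr fun u _ => ?_
        rw [Real.cos_two_mul_eq_one_sub]
        ring
    _ = -(2 / (3 * π)) := by
        rw [intervalIntegral.integral_sub (Real.continuous_sin.intervalIntegrable _ _)
          ((by fun_prop : Continuous fun u => 2 * Real.sin u ^ 3).intervalIntegrable _ _),
          intervalIntegral.integral_const_mul, integral_sin, integral_sin_pow_three]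
        norm_num
        ring

def perturbedDensity (ε : ℝ) (θ : UnitAddCircle) : ℝ := 1 + ε * (fourier 2 θ).re

lemma continuous_perturbedDensity (ε : ℝ) : Continuous (perturbedDensity ε) := by
  unfold perturbedDensity; fun_prop

lemma one_sub_le_perturbedDensity {ε : ℝ} (hε : 0 ≤ ε) (θ : UnitAddCircle) :
    1 - ε ≤ perturbedDensity ε θ := by
  have := mul_le_mul_of_nonneg_left (neg_le_of_abs_le (abs_re_fourier_le_one 2 θ)) hε
  unfold perturbedDensity; linarith

lemma integral_perturbedDensity (ε : ℝ) : ∫ θ, perturbedDensity ε θ ∂circleMeasure = 1 := by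
  unfold perturbedDensity
  rw [integral_add (integrable_const _)
    (by fun_prop : Continuous fun θ => ε * (fourier 2 θ).re).integrable_circleMeasure,
    MeasureTheory.integral_const_mul, integral_re_fourier two_ne_zero]
  simp

lemma integral_absSin_sub_mul_perturbedDensity (ε : ℝ) (θ : UnitAddCircle) :
    ∫ φ, absSin (θ - φ) * perturbedDensity ε φ ∂circleMeasure
      = 2 / π - 2 * ε / (3 * π) * (fourier 2 θ).re := by
  simp only [perturbedDensity, mul_add, mul_one, mul_left_comm _ ε]
  have hshift : Continuous fun φ => absSin (θ - φ) := by fun_prop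
  have hprod : Continuous fun φ => ε * (absSin (θ - φ) * (fourier 2 φ).re) := by fun_prop
  rw [integral_add hshift.integrable_circleMeasure hprod.integrable_circleMeasure,
    MeasureTheory.integral_const_mul, integral_sub_left_eq_self absSin,
    integral_sub_mul_re_fourier continuous_absSin.integrable_circleMeasure,
    integral_mul_im_fourier_of_even absSin_neg, integral_absSin,
    integral_absSin_mul_re_fourier_two]
  ring

lemma integral_integral_absSin_mul_perturbedDensity (ε : ℝ) :
    ∫ θ, (∫ θ', absSin (θ - θ') * perturbedDensity ε θ * perturbedDensity ε θ' ∂circleMeasure)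
        ∂circleMeasure = 2 / π - ε ^ 2 / (3 * π) := by
  have hinner : ∀ θ, ∫ θ', absSin (θ - θ') * perturbedDensity ε θ * perturbedDensity ε θ'
      ∂circleMeasure = perturbedDensity ε θ * (2 / π - 2 * ε / (3 * π) * (fourier 2 θ).re) :=
    fun θ => by
      rw [← integral_absSin_sub_mul_perturbedDensity, ← MeasureTheory.integral_const_mul]
      congr 1 with θ'
      ring
  simp only [hinner]
  unfold perturbedDensity
  have hexpand : ∀ c : ℝ, (1 + ε * c) * (2 / π - 2 * ε / (3 * π) * c)
      = 2 / π + (4 * ε / (3 * π)) * c - (2 * ε ^ 2 / (3 * π)) * c ^ 2 := fun c => by ring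
  have hc := (by fun_prop : Continuous fun θ => (fourier 2 θ).re).integrable_circleMeasure
  have hc2 := (by fun_prop : Continuous fun θ => (fourier 2 θ).re ^ 2).integrable_circleMeasure
  simp only [hexpand]
  rw [integral_sub (f := fun θ => 2 / π + 4 * ε / (3 * π) * (fourier 2 θ).re)
      ((integrable_const _).add (hc.const_mul _)) (hc2.const_mul _),
    integral_add (integrable_const _) (hc.const_mul _), MeasureTheory.integral_const_mul,
    MeasureTheory.integral_const_mul, integral_re_fourier two_ne_zero,
    integral_re_fourier_sq two_ne_zero]
  simp
  ring

lemma integral_mul_log_perturbedDensity_le {ε : ℝ} (h0 : 0 ≤ ε) (h1 : ε ≤ 1 / 2) :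
    ∫ θ, perturbedDensity ε θ * Real.log (perturbedDensity ε θ) ∂circleMeasure
      ≤ (1 / 2 + 4 * ε) * ε ^ 2 / 2 := by
  have hpt : ∀ θ, perturbedDensity ε θ * Real.log (perturbedDensity ε θ)
      ≤ ε * (fourier 2 θ).re + (1 / 2 + 4 * ε) * ε ^ 2 * (fourier 2 θ).re ^ 2 := fun θ => by
    have hc := abs_re_fourier_le_one 2 θ
    have ht : |ε * (fourier 2 θ).re| ≤ ε := by
      rw [abs_mul, abs_of_nonneg h0]; exact mul_le_of_le_one_right h0 hc
    have h3 : |ε * (fourier 2 θ).re| ^ 3 ≤ ε * (ε * (fourier 2 θ).re) ^ 2 := by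
      rw [pow_succ, ← sq_abs (ε * _)]; nlinarith [sq_nonneg (ε * (fourier 2 θ).re)]
    have := one_add_mul_log_one_add_le (ht.trans h1)
    unfold perturbedDensity
    nlinarith
  have hc := (by fun_prop : Continuous fun θ => (fourier 2 θ).re).integrable_circleMeasure
  have hc2 := (by fun_prop : Continuous fun θ => (fourier 2 θ).re ^ 2).integrable_circleMeasure
  have hq := continuous_perturbedDensity ε
  calc _ ≤ ∫ θ, (ε * (fourier 2 θ).re + (1 / 2 + 4 * ε) * ε ^ 2 * (fourier 2 θ).re ^ 2)
        ∂circleMeasure := by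
        refine integral_mono ?_ ((hc.const_mul _).add (hc2.const_mul _)) hpt
        refine (hq.mul (hq.log fun θ => ?_)).integrable_circleMeasure
        linarith [one_sub_le_perturbedDensity h0 θ]
    _ = (1 / 2 + 4 * ε) * ε ^ 2 / 2 := by
      rw [integral_add (hc.const_mul _) (hc2.const_mul _), MeasureTheory.integral_const_mul,
        MeasureTheory.integral_const_mul, integral_re_fourier two_ne_zero,
        integral_re_fourier_sq two_ne_zero]
      ring

/-- **Doi–Onsager model, supercritical regime.** For every `K > 3π/4` there exists a
continuous probability density `q` on the circle with
`∫ q log q + K ∫∫ |sin(2π(θ−θ'))| q(θ) q(θ') < 2K/π`; i.e. the uniform density is not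
a global minimizer of the Doi–Onsager free energy. -/
theorem doi_onsager_supercritical
    (K : ℝ) (hK : 3 * π / 4 < K) :
    ∃ q : UnitAddCircle → ℝ, Continuous q ∧ (∀ θ, 0 ≤ q θ) ∧
      (∫ θ, q θ ∂circleMeasure = 1) ∧
      (∫ θ, q θ * Real.log (q θ) ∂circleMeasure) +
          K * (∫ θ, (∫ θ', absSin (θ - θ') * q θ * q θ' ∂circleMeasure) ∂circleMeasure)
        < 2 * K / π := by
  obtain ⟨ε, hε0, hε⟩ := exists_between
    (lt_min one_half_pos (div_pos (by linarith) (by positivity)) :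
      (0 : ℝ) < min (1 / 2) ((4 * K - 3 * π) / (24 * π)))
  obtain ⟨hε1, hεK⟩ := lt_min_iff.mp hε
  rw [lt_div_iff₀ (by positivity)] at hεK
  refine ⟨perturbedDensity ε, continuous_perturbedDensity ε,
    fun θ => by linarith [one_sub_le_perturbedDensity hε0.le θ], integral_perturbedDensity ε, ?_⟩
  have hentropy := integral_mul_log_perturbedDensity_le hε0.le hε1.le
  have hgain : (1 / 2 + 4 * ε) * ε ^ 2 / 2 < K * ε ^ 2 / (3 * π) := by
    rw [lt_div_iff₀ (by positivity)]
    nlinarith [mul_lt_mul_of_pos_left hεK (pow_pos hε0 2)]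
  have henergy : K * (2 / π - ε ^ 2 / (3 * π)) = 2 * K / π - K * ε ^ 2 / (3 * π) := by ring
  rw [integral_integral_absSin_mul_perturbedDensity, henergy]
  linarith
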